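/- Let a ≥ 1 and b ∈ ℝ. For the continuous log penalty objective g_ρ(β) = (a/2)(β − b)² + ρ·ln(√ρ + |β|) with ρ > 0: (i) if 0 < ρ ≤ a²b², then the discriminant (|b| + √ρ)² − 4ρ/a is nonnegative and β̂(ρ) = sgn(b)·[(|b| − √ρ) + ((|b| + √ρ)² − 4ρ/a)^{1/2}]/2 is a global minimizer of g_ρ; (ii) if ρ ≥ a²b², then β̂(ρ) = 0 is a global minimizer of g_ρ. Moreover the resulting map ρ ↦ β̂(ρ) is continuous on (0,∞). -/

import Mathlib

/-!
Since `(|β| - |b|)² ≤ (β - b)²`, the objective satisfies `g_ρ(β) ≥ h(|β|)` for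
`h(s) = (a/2)(s - |b|)² + ρ ln(√ρ + s)`, with equality at `β = sgn(b)·s`; so it suffices to
minimise `h` on `[0, ∞)`. There `h'(s) = q(s) / (√ρ + s)` with the quadratic
`q(s) = a(s - |b|)(√ρ + s) + ρ`, whose roots are `(|b| - √ρ ± √D)/2`,
`D = (|b| + √ρ)² - 4ρ/a`. If `√ρ ≤ a|b|` then `D ≥ (|b| - √ρ)²`, so the smaller root is
`≤ 0` and `h` decreases up to the larger root and increases after it. If `√ρ ≥ a|b|` and `a ≥ 1`,
then `q > 0` on `(0, ∞)` and `h` is minimised at `0`. At `ρ = a²b²` the larger root is `0`,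
so `β̂(ρ)` is `sgn(b)` times the larger root at `min(ρ, a²b²)`, a continuous function of `ρ`.
-/

open Real Set

theorem isMinOn_Ici_of_hasDerivAt {f f' : ℝ → ℝ} {c x₀ : ℝ} (hx₀ : c ≤ x₀)
    (hf : ∀ x, c ≤ x → HasDerivAt f (f' x) x)
    (hneg : ∀ x ∈ Ioo c x₀, f' x ≤ 0) (hpos : ∀ x ∈ Ioi x₀, 0 ≤ f' x) :
    IsMinOn f (Ici c) x₀ := by
  have hcont : ContinuousOn f (Ici c) := fun x hx => (hf x hx).continuousAt.continuousWithinAt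
  have hanti : AntitoneOn f (Icc c x₀) := by
    refine antitoneOn_of_hasDerivWithinAt_nonpos (f' := f') (convex_Icc c x₀)
      (hcont.mono Icc_subset_Ici_self) (fun x hx => ?_) (fun x hx => ?_)
    · rw [interior_Icc] at hx
      exact (hf x hx.1.le).hasDerivWithinAt
    · rw [interior_Icc] at hx
      exact hneg x hx
  have hmono : MonotoneOn f (Ici x₀) := by
    refine monotoneOn_of_hasDerivWithinAt_nonneg (f' := f') (convex_Ici x₀)
      (hcont.mono (Ici_subset_Ici.mpr hx₀)) (fun x hx => ?_) (fun x hx => ?_)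
    · rw [interior_Ici] at hx
      exact (hf x (hx₀.trans hx.le)).hasDerivWithinAt
    · rw [interior_Ici] at hx
      exact hpos x hx
  intro x (hx : c ≤ x)
  rcases le_total x x₀ with hxx₀ | hx₀x
  · exact hanti ⟨hx, hxx₀⟩ ⟨hx₀, le_rfl⟩ hxx₀
  · exact hmono self_mem_Ici hx₀x hx₀x

theorem sq_abs_sub_abs_le_sq_sub (x y : ℝ) : (|x| - |y|) ^ 2 ≤ (x - y) ^ 2 :=
  sq_le_sq.mpr (by simpa using abs_abs_sub_abs_le_abs_sub x y)

noncomputable def logPenaltyObjective (a b ρ β : ℝ) : ℝ :=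
  a / 2 * (β - b) ^ 2 + ρ * log (√ρ + |β|)

noncomputable def logPenaltyRadial (a B ρ s : ℝ) : ℝ :=
  a / 2 * (s - B) ^ 2 + ρ * log (√ρ + s)

noncomputable def logPenaltyDisc (a B ρ : ℝ) : ℝ :=
  (B + √ρ) ^ 2 - 4 * ρ / a

noncomputable def logPenaltyRoot (a B ρ : ℝ) : ℝ :=
  ((B - √ρ) + √(logPenaltyDisc a B ρ)) / 2

section Radial

variable {a B ρ : ℝ}

theorem hasDerivAt_logPenaltyRadial {x : ℝ} (hx : 0 < √ρ + x) :
    HasDerivAt (logPenaltyRadial a B ρ) ((a * (x - B) * (√ρ + x) + ρ) / (√ρ + x)) x := by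
  have hsq : HasDerivAt (fun s => (s - B) ^ 2) (2 * (x - B)) x := by
    simpa using ((hasDerivAt_id x).sub_const B).fun_pow 2
  have hlog : HasDerivAt (fun s => log (√ρ + s)) (1 / (√ρ + x)) x := by
    simpa using ((hasDerivAt_id x).const_add (√ρ)).log hx.ne'
  refine ((hsq.const_mul (a / 2)).fun_add (hlog.const_mul ρ)).congr_deriv ?_
  field_simp

theorem isMinOn_logPenaltyRadial {s₀ : ℝ} (hρ : 0 < ρ) (hs₀ : 0 ≤ s₀)
    (hneg : ∀ x ∈ Ioo 0 s₀, a * (x - B) * (√ρ + x) + ρ ≤ 0)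
    (hpos : ∀ x ∈ Ioi s₀, 0 ≤ a * (x - B) * (√ρ + x) + ρ) :
    IsMinOn (logPenaltyRadial a B ρ) (Ici 0) s₀ := by
  have hden : ∀ x, 0 ≤ x → 0 < √ρ + x := fun x hx => by positivity
  refine isMinOn_Ici_of_hasDerivAt hs₀
    (fun x hx => hasDerivAt_logPenaltyRadial (hden x hx)) (fun x hx => ?_) (fun x hx => ?_)
  · exact div_nonpos_of_nonpos_of_nonneg (hneg x hx) (hden x hx.1.le).le
  · exact div_nonneg (hpos x hx) (hden x (hs₀.trans (le_of_lt hx))).le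

end Radial

section Objective

variable {a b ρ : ℝ}

theorem logPenaltyRadial_abs_le (ha : 0 ≤ a) (β : ℝ) :
    logPenaltyRadial a |b| ρ |β| ≤ logPenaltyObjective a b ρ β := by
  unfold logPenaltyRadial logPenaltyObjective
  gcongr ?_ + _
  exact mul_le_mul_of_nonneg_left (sq_abs_sub_abs_le_sq_sub β b) (by positivity)

theorem logPenaltyObjective_sign_mul {s : ℝ} (hb : b ≠ 0) (hs : 0 ≤ s) :
    logPenaltyObjective a b ρ (sign b * s) = logPenaltyRadial a |b| ρ s := by
  unfold logPenaltyRadial logPenaltyObjective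
  rcases hb.lt_or_gt with hb | hb
  · rw [sign_of_neg hb, abs_of_neg hb, neg_one_mul, abs_neg, abs_of_nonneg hs]
    ring
  · rw [sign_of_pos hb, abs_of_pos hb, one_mul, abs_of_nonneg hs]

theorem logPenaltyObjective_zero :
    logPenaltyObjective a b ρ 0 = logPenaltyRadial a |b| ρ 0 := by
  simp [logPenaltyRadial, logPenaltyObjective]

theorem isMinOn_logPenaltyObjective {β₀ s : ℝ} (ha : 0 ≤ a)
    (hs : IsMinOn (logPenaltyRadial a |b| ρ) (Ici 0) s)
    (hβ₀ : logPenaltyObjective a b ρ β₀ = logPenaltyRadial a |b| ρ s) :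
    IsMinOn (logPenaltyObjective a b ρ) univ β₀ := isMinOn_univ_iff.mpr fun β => by
  rw [hβ₀]
  exact (hs (abs_nonneg β)).trans (logPenaltyRadial_abs_le ha β)

theorem isMinOn_logPenaltyObjective_sign_mul {s : ℝ} (ha : 0 ≤ a) (hb : b ≠ 0) (hs₀ : 0 ≤ s)
    (hs : IsMinOn (logPenaltyRadial a |b| ρ) (Ici 0) s) :
    IsMinOn (logPenaltyObjective a b ρ) univ (sign b * s) :=
  isMinOn_logPenaltyObjective ha hs (logPenaltyObjective_sign_mul hb hs₀)

theorem isMinOn_logPenaltyObjective_zero (ha : 0 ≤ a)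
    (hs : IsMinOn (logPenaltyRadial a |b| ρ) (Ici 0) 0) :
    IsMinOn (logPenaltyObjective a b ρ) univ 0 :=
  isMinOn_logPenaltyObjective ha hs logPenaltyObjective_zero

end Objective

section Root

variable {a B ρ : ℝ}

theorem sq_sub_sqrt_le_logPenaltyDisc (ha : 0 < a) (hρ : 0 ≤ ρ) (hρB : √ρ ≤ a * B) :
    (B - √ρ) ^ 2 ≤ logPenaltyDisc a B ρ := by
  have hsq : √ρ ^ 2 = ρ := sq_sqrt hρ
  have key : logPenaltyDisc a B ρ - (B - √ρ) ^ 2 = 4 * √ρ * (a * B - √ρ) / a := by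
    unfold logPenaltyDisc
    field_simp
    linear_combination 4 * hsq
  have : 0 ≤ 4 * √ρ * (a * B - √ρ) / a := by
    have := sub_nonneg.mpr hρB
    positivity
  linarith

theorem abs_sub_sqrt_le_sqrt_logPenaltyDisc (ha : 0 < a) (hρ : 0 ≤ ρ)
    (hρB : √ρ ≤ a * B) : |B - √ρ| ≤ √(logPenaltyDisc a B ρ) := by
  rw [← sqrt_sq_eq_abs]
  exact sqrt_le_sqrt (sq_sub_sqrt_le_logPenaltyDisc ha hρ hρB)

theorem logPenaltyRadial_numerator_eq (ha : a ≠ 0) (hD : 0 ≤ logPenaltyDisc a B ρ) (x : ℝ) :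
    a * (x - B) * (√ρ + x) + ρ =
      a * (x - logPenaltyRoot a B ρ) * (x - (B - √ρ - logPenaltyRoot a B ρ)) := by
  have hr : a * √(logPenaltyDisc a B ρ) ^ 2 = a * (B + √ρ) ^ 2 - 4 * ρ := by
    rw [sq_sqrt hD, logPenaltyDisc]
    field_simp
  unfold logPenaltyRoot
  linear_combination hr / 4

theorem logPenaltyRoot_nonneg (ha : 0 < a) (hρ : 0 ≤ ρ) (hρB : √ρ ≤ a * B) :
    0 ≤ logPenaltyRoot a B ρ := by
  have habs := neg_abs_le (B - √ρ)
  have := abs_sub_sqrt_le_sqrt_logPenaltyDisc ha hρ hρB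
  unfold logPenaltyRoot
  linarith

theorem isMinOn_logPenaltyRadial_root (ha : 0 < a) (hρ : 0 < ρ)
    (hρB : √ρ ≤ a * B) : IsMinOn (logPenaltyRadial a B ρ) (Ici 0) (logPenaltyRoot a B ρ) := by
  have habs := abs_le.mp (abs_sub_sqrt_le_sqrt_logPenaltyDisc ha hρ.le hρB)
  have hD := (sq_nonneg _).trans (sq_sub_sqrt_le_logPenaltyDisc ha hρ.le hρB)
  have hroot := logPenaltyRoot_nonneg ha hρ.le hρB
  have hother : B - √ρ - logPenaltyRoot a B ρ ≤ 0 := by unfold logPenaltyRoot; linarith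
  refine isMinOn_logPenaltyRadial hρ hroot (fun x hx => ?_) (fun x hx => ?_) <;>
    rw [logPenaltyRadial_numerator_eq ha.ne' hD]
  · have h₁ : x - logPenaltyRoot a B ρ ≤ 0 := by linarith [hx.2]
    have h₂ : 0 ≤ x - (B - √ρ - logPenaltyRoot a B ρ) := by linarith [hx.1]
    exact mul_nonpos_of_nonpos_of_nonneg (mul_nonpos_of_nonneg_of_nonpos ha.le h₁) h₂
  · have h₁ : 0 ≤ x - logPenaltyRoot a B ρ := by linarith [mem_Ioi.mp hx]
    have h₂ : 0 ≤ x - (B - √ρ - logPenaltyRoot a B ρ) := by linarith [mem_Ioi.mp hx]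
    positivity

theorem isMinOn_logPenaltyRadial_zero (ha : 1 ≤ a) (hB : 0 ≤ B) (hρ : 0 < ρ)
    (hρB : a * B ≤ √ρ) : IsMinOn (logPenaltyRadial a B ρ) (Ici 0) 0 := by
  have hsq : √ρ ^ 2 = ρ := sq_sqrt hρ.le
  have hBρ : B ≤ √ρ := by nlinarith
  refine isMinOn_logPenaltyRadial hρ le_rfl (fun x hx => absurd hx.2 hx.1.not_gt)
    fun x hx => ?_
  have hx : 0 < x := hx
  nlinarith [mul_nonneg (mul_nonneg (zero_le_one.trans ha) hx.le) (sub_nonneg.mpr hBρ),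
    mul_nonneg (sqrt_nonneg ρ) (sub_nonneg.mpr hρB), mul_nonneg hx.le hx.le]

theorem logPenaltyRoot_threshold_eq_zero (ha : 1 ≤ a) (hB : 0 ≤ B) :
    logPenaltyRoot a B ((a * B) ^ 2) = 0 := by
  have ha₀ : 0 < a := zero_lt_one.trans_le ha
  have hD : logPenaltyDisc a B ((a * B) ^ 2) = (B * (a - 1)) ^ 2 := by
    rw [logPenaltyDisc, sqrt_sq (by positivity)]
    field_simp
    ring
  rw [logPenaltyRoot, sqrt_sq (by positivity), hD, sqrt_sq (mul_nonneg hB (sub_nonneg.mpr ha))]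
  ring

theorem continuous_logPenaltyRoot (a B : ℝ) : Continuous (logPenaltyRoot a B) := by
  unfold logPenaltyRoot logPenaltyDisc
  fun_prop

end Root

/-- For the continuous log penalty objective
`g_ρ(β) = (a/2)(β − b)² + ρ·ln(√ρ + |β|)` with `a ≥ 1`: (i) for `0 < ρ ≤ a²b²` the
discriminant `(|b| + √ρ)² − 4ρ/a` is nonnegative and
`β̂(ρ) = sgn(b)·[(|b| − √ρ) + √((|b| + √ρ)² − 4ρ/a)]/2` is a global minimizer;
(ii) for `ρ ≥ a²b²` the point `0` is a global minimizer; and the map `ρ ↦ β̂(ρ)` is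
continuous on `(0,∞)`. -/
theorem continuous_log_penalty_path
    (a b : ℝ) (ha : 1 ≤ a)
    (g : ℝ → ℝ → ℝ)
    (hg : ∀ ρ β : ℝ, g ρ β = a / 2 * (β - b) ^ 2 + ρ * Real.log (Real.sqrt ρ + |β|))
    (βhat : ℝ → ℝ)
    (hβhat : ∀ ρ : ℝ, βhat ρ =
      if ρ < a ^ 2 * b ^ 2 then
        Real.sign b *
          ((|b| - Real.sqrt ρ) +
            Real.sqrt ((|b| + Real.sqrt ρ) ^ 2 - 4 * ρ / a)) / 2
      else 0) :
    (∀ ρ : ℝ, 0 < ρ → ρ ≤ a ^ 2 * b ^ 2 →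
      0 ≤ (|b| + Real.sqrt ρ) ^ 2 - 4 * ρ / a ∧
      ∀ β : ℝ,
        g ρ (Real.sign b *
          ((|b| - Real.sqrt ρ) +
            Real.sqrt ((|b| + Real.sqrt ρ) ^ 2 - 4 * ρ / a)) / 2) ≤ g ρ β) ∧
    (∀ ρ : ℝ, 0 < ρ → a ^ 2 * b ^ 2 ≤ ρ → ∀ β : ℝ, g ρ 0 ≤ g ρ β) ∧
    ContinuousOn βhat (Set.Ioi 0) := by
  have ha₀ : 0 < a := zero_lt_one.trans_le ha
  have hK : a ^ 2 * b ^ 2 = (a * |b|) ^ 2 := by rw [mul_pow, sq_abs]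
  have hroot (ρ : ℝ) : sign b * ((|b| - √ρ) + √((|b| + √ρ) ^ 2 - 4 * ρ / a)) / 2 =
      sign b * logPenaltyRoot a |b| ρ := mul_div_assoc _ _ _
  obtain rfl : g = logPenaltyObjective a b := funext fun ρ => funext (hg ρ)
  simp only [hroot, hK] at hβhat ⊢
  refine ⟨fun ρ hρ hρK => ?_, fun ρ hρ hKρ => ?_, ?_⟩
  · have hρB : √ρ ≤ a * |b| := (sqrt_le_left (by positivity)).mpr hρK
    have hb : b ≠ 0 := by
      rintro rfl
      simp [hρ.not_ge] at hρK
    exact ⟨(sq_nonneg _).trans (sq_sub_sqrt_le_logPenaltyDisc ha₀ hρ.le hρB),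
      isMinOn_univ_iff.mp <| isMinOn_logPenaltyObjective_sign_mul ha₀.le hb
        (logPenaltyRoot_nonneg ha₀ hρ.le hρB) (isMinOn_logPenaltyRadial_root ha₀ hρ hρB)⟩
  · have hBρ : a * |b| ≤ √ρ := (le_sqrt (by positivity) hρ.le).mpr hKρ
    exact isMinOn_univ_iff.mp <| isMinOn_logPenaltyObjective_zero ha₀.le
      (isMinOn_logPenaltyRadial_zero ha (abs_nonneg b) hρ hBρ)
  · have hβhat_eq : βhat = fun ρ => sign b * logPenaltyRoot a |b| (min ρ ((a * |b|) ^ 2)) := by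
      funext ρ
      rw [hβhat]
      split_ifs with h
      · rw [min_eq_left h.le]
      · rw [min_eq_right (not_lt.mp h), logPenaltyRoot_threshold_eq_zero ha (abs_nonneg b),
          mul_zero]
    rw [hβhat_eq]
    exact (continuous_const.mul ((continuous_logPenaltyRoot a |b|).comp
      (continuous_id.min continuous_const))).continuousOn
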